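/- arXiv:1607.08294 — 3 statements merged into one kernel-verified Lean document; each statement's English description precedes it below -/
import Mathlib

section
/- Let M = [A_{ij}] be a symmetric 3×3 matrix over a field K of characteristic zero with A₁₃ = A₂₂, and suppose d ∈ K satisfies d² = −A₂₂·det(M). Then the point with homogeneous coordinates X₁ = A₂₂(A₂₂A₃₃ − A₂₃²), X₂ = −A₂₃d − A₂₂(A₁₂A₃₃ − A₁₃A₂₃), X₃ = A₂₂(d + A₁₂A₂₃ − A₁₃A₂₂) lies on the conic ∑_{i,j} A_{ij}X_iX_j = 0. -/
open Matrix

/-- A rational point on the conic associated to a symmetric matrix `M` with `A₁₃ = A₂₂`,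
over any field containing a square root `d` of `−A₂₂·det M`. -/
theorem rational_point_on_conic {K : Type*} [Field K] [CharZero K]
    (A11 A12 A13 A22 A23 A33 d : K)
    (h13 : A13 = A22)
    (hd : d ^ 2 = -A22 * (!![A11, A12, A13; A12, A22, A23; A13, A23, A33] :
      Matrix (Fin 3) (Fin 3) K).det) :
    A11 * (A22 * (A22 * A33 - A23 ^ 2)) ^ 2
      + A22 * (-A23 * d - A22 * (A12 * A33 - A13 * A23)) ^ 2
      + A33 * (A22 * (d + A12 * A23 - A13 * A22)) ^ 2
      + 2 * A12 * (A22 * (A22 * A33 - A23 ^ 2))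
          * (-A23 * d - A22 * (A12 * A33 - A13 * A23))
      + 2 * A13 * (A22 * (A22 * A33 - A23 ^ 2))
          * (A22 * (d + A12 * A23 - A13 * A22))
      + 2 * A23 * (-A23 * d - A22 * (A12 * A33 - A13 * A23))
          * (A22 * (d + A12 * A23 - A13 * A22)) = 0 := by
  subst h13
  simp [Matrix.det_fin_three] at hd
  linear_combination (A13*(A13*A33 - A23^2)) * hd
end

section
/- The square of the odd Siegel modular form χ₃₅ is expressed in terms of the Igusa invariants by χ₃₅² = −(3¹⁸·5²⁰/2⁷⁴)·I₁₀⁴·I₃₀, where I₃₀ = R², under the substitutions I₂ = −24χ₁₂/χ₁₀, I₄ = 4ψ₄, I₆ = −(8/3)ψ₆ − 32ψ₄χ₁₂/χ₁₀, I₁₀ = −2¹⁴χ₁₀. Equivalently (as a rational function identity in the independent variables ψ₄, ψ₆, χ₁₀, χ₁₂): the degree-60 polynomial Q(ψ₄,ψ₆,χ₁₀,χ₁₂) from Igusa's formula for 2¹²·3⁹·χ₃₅²/χ₁₀ satisfies R² = −2⁶·3⁻²⁷·5⁻²⁰·Q/χ₁₀³ when R² is computed from these I-values. -/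
open Matrix

variable {K : Type*} [Field K] [CharZero K]

/-- Igusa's relations for the Igusa invariants in terms of Siegel modular forms. -/
noncomputable def igI2 (p4 p6 c10 c12 : K) : K := -24 * c12 / c10
noncomputable def igI4 (p4 p6 c10 c12 : K) : K := 4 * p4
noncomputable def igI6 (p4 p6 c10 c12 : K) : K := -(8 / 3) * p6 - 32 * p4 * c12 / c10
noncomputable def igI10 (p4 p6 c10 c12 : K) : K := -2 ^ 14 * c10

/-- The Clebsch invariants in terms of the Igusa invariants (inverse transformation). -/
noncomputable def clA (I2 I4 I6 I10 : K) : K := -I2 / 120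
noncomputable def clB (I2 I4 I6 I10 : K) : K := (I2 ^ 2 + 20 * I4) / 135000
noncomputable def clC (I2 I4 I6 I10 : K) : K :=
  -(I2 ^ 3 + 80 * I2 * I4 - 600 * I6) / 121500000
noncomputable def clD (I2 I4 I6 I10 : K) : K :=
  -(9 * I2 ^ 5 + 700 * I2 ^ 3 * I4 - 3600 * I2 ^ 2 * I6 - 12400 * I2 * I4 ^ 2
      + 48000 * I4 * I6 + 10800000 * I10) / (2 ^ 8 * 3 ^ 9 * 5 ^ 10)

/-- `R² = det M / 2` for the Clebsch conic matrix. -/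
noncomputable def RsqClebsch (A B C D : K) : K :=
  (!![2 * C + A * B / 3, 2 * (B ^ 2 + A * C) / 3, D;
      2 * (B ^ 2 + A * C) / 3, D,
        B * (B ^ 2 + A * C) / 3 + C * (2 * C + A * B / 3) / 3;
      D, B * (B ^ 2 + A * C) / 3 + C * (2 * C + A * B / 3) / 3,
        B * D / 2 + 2 * C * (B ^ 2 + A * C) / 9] :
    Matrix (Fin 3) (Fin 3) K).det / 2

/-- Igusa's degree-60 polynomial `Q` with `2¹²·3⁹·χ₃₅² = χ₁₀·Q`. -/
noncomputable def Qigusa (p4 p6 c10 c12 : K) : K :=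
  2 ^ 24 * 3 ^ 15 * c12 ^ 5 - 2 ^ 13 * 3 ^ 9 * p4 ^ 3 * c12 ^ 4
    - 2 ^ 13 * 3 ^ 9 * p6 ^ 2 * c12 ^ 4 + 3 ^ 3 * p4 ^ 6 * c12 ^ 3
    - 2 * 3 ^ 3 * p4 ^ 3 * p6 ^ 2 * c12 ^ 3
    - 2 ^ 14 * 3 ^ 8 * p4 ^ 2 * p6 * c10 * c12 ^ 3
    - 2 ^ 23 * 3 ^ 12 * 5 ^ 2 * p4 * c10 ^ 2 * c12 ^ 3 + 3 ^ 3 * p6 ^ 4 * c12 ^ 3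
    + 2 ^ 11 * 3 ^ 6 * 37 * p4 ^ 4 * c10 ^ 2 * c12 ^ 2
    + 2 ^ 11 * 3 ^ 6 * 5 * 7 * p4 * p6 ^ 2 * c10 ^ 2 * c12 ^ 2
    - 2 ^ 23 * 3 ^ 9 * 5 ^ 3 * p6 * c10 ^ 3 * c12 ^ 2
    - 3 ^ 2 * p4 ^ 7 * c10 ^ 2 * c12 + 2 * 3 ^ 2 * p4 ^ 4 * p6 ^ 2 * c10 ^ 2 * c12
    + 2 ^ 11 * 3 ^ 5 * 5 * 19 * p4 ^ 3 * p6 * c10 ^ 3 * c12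
    + 2 ^ 20 * 3 ^ 8 * 5 ^ 3 * 11 * p4 ^ 2 * c10 ^ 4 * c12
    - 3 ^ 2 * p4 * p6 ^ 4 * c10 ^ 2 * c12
    + 2 ^ 11 * 3 ^ 5 * 5 ^ 2 * p6 ^ 3 * c10 ^ 3 * c12
    - 2 * p4 ^ 6 * p6 * c10 ^ 3 - 2 ^ 12 * 3 ^ 4 * p4 ^ 5 * c10 ^ 4
    + 2 ^ 2 * p4 ^ 3 * p6 ^ 3 * c10 ^ 3
    + 2 ^ 12 * 3 ^ 4 * 5 ^ 2 * p4 ^ 2 * p6 ^ 2 * c10 ^ 4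
    + 2 ^ 21 * 3 ^ 7 * 5 ^ 4 * p4 * p6 * c10 ^ 5 - 2 * p6 ^ 5 * c10 ^ 3
    + 2 ^ 32 * 3 ^ 9 * 5 ^ 5 * c10 ^ 6

set_option maxHeartbeats 2000000 in
private lemma key_poly (p4 p6 x u : K) :
    RsqClebsch (clA (-24*x) (4*p4) (-(8/3)*p6 - 32*p4*x) (-2^14*u))
        (clB (-24*x) (4*p4) (-(8/3)*p6 - 32*p4*x) (-2^14*u))
        (clC (-24*x) (4*p4) (-(8/3)*p6 - 32*p4*x) (-2^14*u))
        (clD (-24*x) (4*p4) (-(8/3)*p6 - 32*p4*x) (-2^14*u)) =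
      -(2 ^ 6 / (3 ^ 27 * 5 ^ 20)) * ((264180754022400000)*u^3 + (240734712102912)*x^5*u^2 + (-20639121408000)*p6*x^2*u^2 + (-161243136)*p6^2*x^4*u + (12441600)*p6^3*x*u + (27)*p6^4*x^3 + (-2)*p6^5 + (-111451255603200)*p4*x^3*u^2 + (2866544640000)*p4*p6*u^2 + (52254720)*p4*p6^2*x^2*u + (-9)*p4*p6^4*x + (9459597312000)*p4^2*x*u^2 + (-107495424)*p4^2*p6*x^3*u + (8294400)*p4^2*p6^2*u + (-161243136)*p4^3*x^4*u + (47278080)*p4^3*p6*x*u + (-54)*p4^3*p6^2*x^3 + (4)*p4^3*p6^3 + (55240704)*p4^4*x^2*u + (18)*p4^4*p6^2*x + (-331776)*p4^5*u + (27)*p4^6*x^3 + (-2)*p4^6*p6 + (-9)*p4^7*x) := by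
  rw [RsqClebsch, clA, clB, clC, clD, Matrix.det_fin_three]
  simp only [Matrix.of_apply, Matrix.cons_val', Matrix.cons_val_zero, Matrix.cons_val_one,
    Matrix.head_cons, Matrix.empty_val', Matrix.cons_val_fin_one, Matrix.cons_val_two,
    Matrix.tail_cons, Matrix.head_fin_const]
  ring

/-- `χ₃₅² = −(3¹⁸·5²⁰/2⁷⁴)·I₁₀⁴·I₃₀` and, equivalently, the rational-function identity
`R² = −2⁶·3⁻²⁷·5⁻²⁰·Q/χ₁₀³` where `R² = I₃₀` is computed from Igusa's `I`-values. -/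
theorem chi35_squared_identity (p4 p6 c10 c12 : K) (h10 : c10 ≠ 0) :
    c10 * Qigusa p4 p6 c10 c12 / (2 ^ 12 * 3 ^ 9) =
      -(3 ^ 18 * 5 ^ 20 / 2 ^ 74) * (igI10 p4 p6 c10 c12) ^ 4 *
        RsqClebsch
          (clA (igI2 p4 p6 c10 c12) (igI4 p4 p6 c10 c12) (igI6 p4 p6 c10 c12) (igI10 p4 p6 c10 c12))
          (clB (igI2 p4 p6 c10 c12) (igI4 p4 p6 c10 c12) (igI6 p4 p6 c10 c12) (igI10 p4 p6 c10 c12))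
          (clC (igI2 p4 p6 c10 c12) (igI4 p4 p6 c10 c12) (igI6 p4 p6 c10 c12) (igI10 p4 p6 c10 c12))
          (clD (igI2 p4 p6 c10 c12) (igI4 p4 p6 c10 c12) (igI6 p4 p6 c10 c12) (igI10 p4 p6 c10 c12)) ∧
    RsqClebsch
        (clA (igI2 p4 p6 c10 c12) (igI4 p4 p6 c10 c12) (igI6 p4 p6 c10 c12) (igI10 p4 p6 c10 c12))
        (clB (igI2 p4 p6 c10 c12) (igI4 p4 p6 c10 c12) (igI6 p4 p6 c10 c12) (igI10 p4 p6 c10 c12))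
        (clC (igI2 p4 p6 c10 c12) (igI4 p4 p6 c10 c12) (igI6 p4 p6 c10 c12) (igI10 p4 p6 c10 c12))
        (clD (igI2 p4 p6 c10 c12) (igI4 p4 p6 c10 c12) (igI6 p4 p6 c10 c12) (igI10 p4 p6 c10 c12)) =
      -(2 ^ 6 / (3 ^ 27 * 5 ^ 20)) * Qigusa p4 p6 c10 c12 / c10 ^ 3 := by
  have h2a : igI2 p4 p6 c10 c12 = -24*(c12/c10) := by unfold igI2; ring
  have h4a : igI4 p4 p6 c10 c12 = 4*p4 := rfl
  have h6a : igI6 p4 p6 c10 c12 = -(8/3)*p6 - 32*p4*(c12/c10) := by unfold igI6; ring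
  have h10a : igI10 p4 p6 c10 c12 = -2^14*c10 := rfl
  have key : RsqClebsch
        (clA (igI2 p4 p6 c10 c12) (igI4 p4 p6 c10 c12) (igI6 p4 p6 c10 c12) (igI10 p4 p6 c10 c12))
        (clB (igI2 p4 p6 c10 c12) (igI4 p4 p6 c10 c12) (igI6 p4 p6 c10 c12) (igI10 p4 p6 c10 c12))
        (clC (igI2 p4 p6 c10 c12) (igI4 p4 p6 c10 c12) (igI6 p4 p6 c10 c12) (igI10 p4 p6 c10 c12))
        (clD (igI2 p4 p6 c10 c12) (igI4 p4 p6 c10 c12) (igI6 p4 p6 c10 c12) (igI10 p4 p6 c10 c12)) =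
      -(2 ^ 6 / (3 ^ 27 * 5 ^ 20)) * Qigusa p4 p6 c10 c12 / c10 ^ 3 := by
    rw [h2a, h4a, h6a, h10a, key_poly p4 p6 (c12/c10) c10, Qigusa]
    linear_combination ((274877906944/11823135040283203125)*c10^3 + (274877906944/11823135040283203125)*c10^4*c10⁻¹ + (274877906944/11823135040283203125)*c10^5*c10⁻¹^2 + (-1073741824/50682163238525390625)*c12^5*c10⁻¹^3 + (-1073741824/50682163238525390625)*c12^5*c10*c10⁻¹^4 + (0)*p6*c12^2 + (0)*p6*c12^2*c10*c10⁻¹ + (-536870912/295578376007080078125)*p6*c12^2*c10^2*c10⁻¹^2 + (524288/36947297000885009765625)*p6^2*c12^4*c10⁻¹^3 + (0)*p6^3*c12 + (131072/119709242282867431640625)*p6^3*c12*c10*c10⁻¹ + (131072/119709242282867431640625)*p6^3*c12*c10^2*c10⁻¹^2 + (-128/727233646868419647216796875)*p6^5 + (-128/727233646868419647216796875)*p6^5*c10*c10⁻¹ + (-128/727233646868419647216796875)*p6^5*c10^2*c10⁻¹^2 + (134217728/532041076812744140625)*p4*p6*c10^2 + (134217728/532041076812744140625)*p4*p6*c10^3*c10⁻¹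 + (134217728/532041076812744140625)*p4*p6*c10^4*c10⁻¹^2 + (0)*p4*p6^2*c12^2*c10⁻¹ + (917504/199515403804779052734375)*p4*p6^2*c12^2*c10*c10⁻¹^2 + (-64/80803738540935516357421875)*p4*p6^4*c12*c10⁻¹ + (-64/80803738540935516357421875)*p4*p6^4*c12*c10*c10⁻¹^2 + (0)*p4^2*c12*c10 + (738197504/886735128021240234375)*p4^2*c12*c10^2*c10⁻¹ + (738197504/886735128021240234375)*p4^2*c12*c10^3*c10⁻¹^2 + (262144/359127726848602294921875)*p4^2*p6^2*c10 + (262144/359127726848602294921875)*p4^2*p6^2*c10^2*c10⁻¹ + (262144/359127726848602294921875)*p4^2*p6^2*c10^3*c10⁻¹^2 + (524288/36947297000885009765625)*p4^3*c12^4*c10⁻¹^3 + (0)*p4^3*p6*c12 + (2490368/598546211414337158203125)*p4^3*p6*c12*c10*c10⁻¹ + (2490368/598546211414337158203125)*p4^3*p6*c12*c10^2*c10⁻¹^2 + (256/727233646868419647216796875)*p4^3*p6^3 + (256/727233646868419647216796875)*p4^3*p6^3*c10*c10⁻¹ + (256/727233646868419647216796875)*p4^3*p6^3*c10^2*c10⁻¹^2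 + (0)*p4^4*c12^2*c10⁻¹ + (4849664/997577019023895263671875)*p4^4*c12^2*c10*c10⁻¹^2 + (128/80803738540935516357421875)*p4^4*p6^2*c12*c10⁻¹ + (128/80803738540935516357421875)*p4^4*p6^2*c12*c10*c10⁻¹^2 + (-262144/8978193171215057373046875)*p4^5*c10 + (-262144/8978193171215057373046875)*p4^5*c10^2*c10⁻¹ + (-262144/8978193171215057373046875)*p4^5*c10^3*c10⁻¹^2 + (-128/727233646868419647216796875)*p4^6*p6 + (-128/727233646868419647216796875)*p4^6*p6*c10*c10⁻¹ + (-128/727233646868419647216796875)*p4^6*p6*c10^2*c10⁻¹^2 + (-64/80803738540935516357421875)*p4^7*c12*c10⁻¹ + (-64/80803738540935516357421875)*p4^7*c12*c10*c10⁻¹^2) * (mul_inv_cancel₀ h10)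
  refine ⟨?_, key⟩
  rw [key, h10a]
  linear_combination (-(Qigusa p4 p6 c10 c12 * c10 *
      (c10^2*c10⁻¹^2 + c10*c10⁻¹ + 1))/(2^12*3^9)) * (mul_inv_cancel₀ h10)
end

section
/- Suppose j₁, j₂ ∈ K satisfy 3j₁ − 40j₂ ≠ 0 and j₁ ≠ 0, and set j₃ = h(j₁,j₂) := 3000 + j₁/400 + 41j₂/180 − (j₂/9)·(11j₂ − 1080000)/(3j₁ − 40j₂). Then 9j₁² + 700j₂j₁ − 3600j₃j₁ − 12400j₂² + 48000j₂j₃ + 10800000j₁ = 0; conversely, if (j₁,j₂,j₃) satisfies this equation with 3j₁ − 40j₂ ≠ 0 and j₁ ≠ 0, then j₃ = h(j₁,j₂). Thus the locus D = 0 is rationally parametrized by (j₁, j₂). -/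
/-! `D` is affine in `j₃` with leading coefficient `-1200 (3j₁ − 40j₂)`, so off the line
`3j₁ = 40j₂` the equation `D = 0` has exactly one solution `j₃ = h(j₁, j₂)`; the whole proof
is the factorisation `D = 1200 (3j₁ − 40j₂) (h − j₃)`. -/

section

variable {K : Type*} [Field K] [CharZero K]

/-- The function `h(j₁, j₂)`. -/
def clebschLocusParam (j1 j2 : K) : K :=
  3000 + j1 / 400 + 41 * j2 / 180 - (j2 / 9) * (11 * j2 - 1080000) / (3 * j1 - 40 * j2)

theorem clebsch_eq_mul_param_sub (j1 j2 j3 : K) (hden : 3 * j1 - 40 * j2 ≠ 0) :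
    9 * j1 ^ 2 + 700 * j2 * j1 - 3600 * j3 * j1 - 12400 * j2 ^ 2 + 48000 * j2 * j3
        + 10800000 * j1 = 1200 * (3 * j1 - 40 * j2) * (clebschLocusParam j1 j2 - j3) := by
  -- `field_simp` looks for the denominator in its own normal form.
  have hden' : j1 * 3 - j2 * 40 ≠ 0 := by rwa [mul_comm j1, mul_comm j2]
  unfold clebschLocusParam
  field_simp
  ring

theorem clebsch_eq_zero_iff (j1 j2 j3 : K) (hden : 3 * j1 - 40 * j2 ≠ 0) :
    9 * j1 ^ 2 + 700 * j2 * j1 - 3600 * j3 * j1 - 12400 * j2 ^ 2 + 48000 * j2 * j3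
        + 10800000 * j1 = 0 ↔ j3 = clebschLocusParam j1 j2 := by
  have hlead : (1200 : K) * (3 * j1 - 40 * j2) ≠ 0 := mul_ne_zero (by norm_num) hden
  rw [clebsch_eq_mul_param_sub j1 j2 j3 hden, mul_eq_zero, or_iff_right hlead, sub_eq_zero,
    eq_comm]

end

theorem D_locus_rational_parametrization_general {K : Type*} [Field K] [CharZero K]
    (j1 j2 : K) (hden : 3 * j1 - 40 * j2 ≠ 0) :
    (∀ j3 : K,
      j3 = 3000 + j1 / 400 + 41 * j2 / 180
          - (j2 / 9) * (11 * j2 - 1080000) / (3 * j1 - 40 * j2) →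
      9 * j1 ^ 2 + 700 * j2 * j1 - 3600 * j3 * j1 - 12400 * j2 ^ 2 + 48000 * j2 * j3
          + 10800000 * j1 = 0) ∧
    (∀ j3 : K,
      9 * j1 ^ 2 + 700 * j2 * j1 - 3600 * j3 * j1 - 12400 * j2 ^ 2 + 48000 * j2 * j3
          + 10800000 * j1 = 0 →
      j3 = 3000 + j1 / 400 + 41 * j2 / 180
          - (j2 / 9) * (11 * j2 - 1080000) / (3 * j1 - 40 * j2)) :=
  ⟨fun j3 => (clebsch_eq_zero_iff j1 j2 j3 hden).2, fun j3 => (clebsch_eq_zero_iff j1 j2 j3 hden).1⟩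

/-- The locus `D = 0` in the absolute Igusa invariants is rationally parametrized by
`j₃ = h(j₁, j₂)`: the parametrization satisfies the equation, and conversely any solution
with `3j₁ − 40j₂ ≠ 0` and `j₁ ≠ 0` is of this form. -/
theorem D_locus_rational_parametrization {K : Type*} [Field K] [CharZero K]
    (j1 j2 : K) (hden : 3 * j1 - 40 * j2 ≠ 0) (hj1 : j1 ≠ 0) :
    (∀ j3 : K,
      j3 = 3000 + j1 / 400 + 41 * j2 / 180
          - (j2 / 9) * (11 * j2 - 1080000) / (3 * j1 - 40 * j2) →
      9 * j1 ^ 2 + 700 * j2 * j1 - 3600 * j3 * j1 - 12400 * j2 ^ 2 + 48000 * j2 * j3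
          + 10800000 * j1 = 0) ∧
    (∀ j3 : K,
      9 * j1 ^ 2 + 700 * j2 * j1 - 3600 * j3 * j1 - 12400 * j2 ^ 2 + 48000 * j2 * j3
          + 10800000 * j1 = 0 →
      j3 = 3000 + j1 / 400 + 41 * j2 / 180
          - (j2 / 9) * (11 * j2 - 1080000) / (3 * j1 - 40 * j2)) :=
  D_locus_rational_parametrization_general j1 j2 hden
end
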